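/- arXiv:1107.2888 — 4 statements merged into one kernel-verified Lean document; each statement's English description precedes it below -/
import Mathlib

section
/- For every ε > 0 and every M there exists an integer n ≥ M and a 2-coloring c of Z_n such that M_4(n,c) ≤ (1/12 + ε)·n². (Equivalently, the lower limit as n → ∞ of min_c M_4(n,c)/n² is at most 1/12.) -/
/-!
Blow a colouring `u` of `ℤ/m` up to `ℤ/mq`: the residue class `h` mod `q` is coloured by `u`
through `x ↦ ⌊x/q⌋`, every other residue `r` gets the colour `A r` of a fixed pattern on `ℤ/q`.
If every `k`-AP of `ℤ/q` with nonzero difference has two terms off `h` with different colours,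
a monochromatic `k`-AP upstairs has difference `≡ 0 mod q`; it is then either constant outside
the class `h` (`(q - 1)m²` of them) or a monochromatic `k`-AP of `u` inside it. So
`M(mq) = (q - 1)m² + M(m)`, and iterating from `M(1) = 1` gives `(q + 1) M(q^j) = q^{2j} + q`.
For `q = 11`, `k = 4` the pattern `00010010111` with hole `5` works, so `M₄(11^j) ~ 11^{2j}/12`.
-/

/-- Number of monochromatic `k`-APs in `Z_n` under the 2-coloring `c`:
pairs `(a,d)` with `c a = c (a+d) = ⋯ = c (a+(k-1)d)`. -/
noncomputable def monoAPCount (n k : ℕ) (c : ZMod n → Fin 2) : ℕ :=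
  Set.ncard {p : ZMod n × ZMod n | ∀ i < k, c (p.1 + i • p.2) = c p.1}

def IsMonoAP {G α : Type*} [AddMonoid G] (k : ℕ) (c : G → α) (a d : G) : Prop :=
  ∀ i < k, c (a + i • d) = c a

section BlowUp

variable {q m : ℕ} {α : Type*}

def BreaksProperAPsOff (k : ℕ) (A : ZMod q → α) (h : ZMod q) : Prop :=
  ∀ r s : ZMod q, s ≠ 0 → ∃ i < k, ∃ j < k,
    r + i • s ≠ h ∧ r + j • s ≠ h ∧ A (r + i • s) ≠ A (r + j • s)

def blowUp (A : ZMod q → α) (h : ZMod q) (u : ZMod m → α) (x : ZMod (m * q)) : α :=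
  if (x.cast : ZMod q) = h then u (x.val / q : ℕ) else A x.cast

def ofDigits (q m : ℕ) (p : ZMod m × ZMod q) : ZMod (m * q) :=
  (p.2.val + q * p.1.val : ℕ)

theorem ofDigits_add_nsmul [NeZero m] (y z : ZMod m) (r : ZMod q) (i : ℕ) :
    ofDigits q m (y, r) + i • ofDigits q m (z, 0) = ofDigits q m (y + i • z, r) := by
  have hval : (y + i • z).val ≡ y.val + i * z.val [MOD m] := by
    rw [← ZMod.natCast_eq_natCast_iff]
    simp
  have hcast := (hval.mul_left' q).add_left r.val
  rw [mul_comm q m, ← ZMod.natCast_eq_natCast_iff] at hcast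
  simp only [ofDigits]
  rw [hcast, nsmul_eq_mul, ZMod.val_zero]
  push_cast
  ring

theorem cast_ofDigits [NeZero q] (p : ZMod m × ZMod q) :
    ((ofDigits q m p).cast : ZMod q) = p.2 := by
  rw [ofDigits, ZMod.cast_natCast (dvd_mul_left q m)]
  simp

theorem cast_ofDigits_add_nsmul [NeZero q] (p p' : ZMod m × ZMod q) (i : ℕ) :
    ((ofDigits q m p + i • ofDigits q m p').cast : ZMod q) = p.2 + i • p'.2 := by
  change ZMod.castHom (dvd_mul_left q m) (ZMod q) _ = _
  rw [map_add, map_nsmul, ZMod.castHom_apply, ZMod.castHom_apply, cast_ofDigits, cast_ofDigits]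

variable [NeZero q] [NeZero m]

theorem val_ofDigits (p : ZMod m × ZMod q) : (ofDigits q m p).val = p.2.val + q * p.1.val := by
  apply ZMod.val_cast_of_lt
  have := p.1.val_lt
  have := p.2.val_lt
  nlinarith

theorem ofDigits_injective : (ofDigits q m).Injective := by
  intro p p' hpp'
  have h2 : p.2 = p'.2 := by
    simpa only [cast_ofDigits] using congrArg (ZMod.cast : ZMod (m * q) → ZMod q) hpp'
  have hv := congrArg ZMod.val hpp'
  rw [val_ofDigits, val_ofDigits, h2, add_right_inj, mul_right_inj' (NeZero.ne q)] at hv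
  exact Prod.ext (ZMod.val_injective m hv) h2

theorem ofDigits_bijective : (ofDigits q m).Bijective :=
  ofDigits_injective.bijective_of_nat_card_le
    (by rw [Nat.card_prod, Nat.card_zmod, Nat.card_zmod, Nat.card_zmod, mul_comm])

theorem blowUp_ofDigits (A : ZMod q → α) (h : ZMod q) (u : ZMod m → α) (y : ZMod m)
    (r : ZMod q) :
    blowUp A h u (ofDigits q m (y, r)) = if r = h then u y else A r := by
  have hdiv : (ofDigits q m (y, r)).val / q = y.val := by
    rw [val_ofDigits, Nat.add_mul_div_left _ _ (NeZero.pos q), Nat.div_eq_of_lt r.val_lt, zero_add]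
  simp [blowUp, cast_ofDigits, hdiv]

theorem isMonoAP_blowUp_ofDigits_iff {k : ℕ} {A : ZMod q → α} {h : ZMod q}
    (hA : BreaksProperAPsOff k A h) (u : ZMod m → α) (y z : ZMod m) (r s : ZMod q) :
    IsMonoAP k (blowUp A h u) (ofDigits q m (y, r)) (ofDigits q m (z, s)) ↔
      s = 0 ∧ (r = h → IsMonoAP k u y z) := by
  by_cases hs : s = 0
  · subst hs
    simp only [IsMonoAP, ofDigits_add_nsmul, blowUp_ofDigits, true_and]
    split_ifs <;> simp_all
  · refine iff_of_false (fun hmono ↦ ?_) (fun h ↦ hs h.1)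
    obtain ⟨i, hi, j, hj, hi_ne, hj_ne, hA_ne⟩ := hA r s hs
    have color_eq {l : ℕ} (hl : r + l • s ≠ h) :
        blowUp A h u (ofDigits q m (y, r) + l • ofDigits q m (z, s)) = A (r + l • s) := by
      rw [blowUp, cast_ofDigits_add_nsmul, if_neg hl]
    exact hA_ne <| (color_eq hi_ne).symm.trans <| (hmono i hi).trans <|
      (hmono j hj).symm.trans (color_eq hj_ne)

end BlowUp

open Classical in
theorem monoAPCount_eq_sum (n k : ℕ) [NeZero n] (c : ZMod n → Fin 2) :
    monoAPCount n k c = ∑ a, ∑ d, if IsMonoAP k c a d then 1 else 0 := by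
  rw [monoAPCount, Set.ncard_eq_toFinset_card', Set.toFinset_ofPred, Finset.card_filter,
    Fintype.sum_prod_type]
  exact Finset.sum_congr rfl fun _ _ ↦ Finset.sum_congr rfl fun _ _ ↦ if_congr Iff.rfl rfl rfl

theorem Fintype.sum_ite_imp {ι : Type*} [Fintype ι] [DecidableEq ι] (i : ι) (P : Prop)
    [Decidable P] :
    ∑ j : ι, (if j = i → P then 1 else 0) = (Fintype.card ι - 1) + if P then 1 else 0 := by
  rw [Fintype.sum_eq_add_sum_compl i, add_comm]
  congr 1
  · rw [Finset.sum_congr rfl (g := fun _ ↦ 1)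
        fun j hj ↦ if_pos fun hji ↦ absurd hji (by simpa using hj),
      Finset.sum_const, Finset.card_compl, Finset.card_singleton, smul_eq_mul, mul_one]
  · simp

theorem monoAPCount_blowUp {q m k : ℕ} [NeZero q] [NeZero m] {A : ZMod q → Fin 2} {h : ZMod q}
    (hA : BreaksProperAPsOff k A h) (u : ZMod m → Fin 2) :
    monoAPCount (m * q) k (blowUp A h u) = (q - 1) * m ^ 2 + monoAPCount m k u := by
  classical
  rw [monoAPCount_eq_sum, monoAPCount_eq_sum, ← ofDigits_bijective.sum_comp]
  simp_rw [← ofDigits_bijective.sum_comp (fun d ↦ if IsMonoAP k _ _ d then 1 else 0),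
    Fintype.sum_prod_type, isMonoAP_blowUp_ofDigits_iff hA, ite_and, Fintype.sum_ite_eq']
  rw [Finset.sum_congr rfl fun y _ ↦ Finset.sum_comm]
  simp_rw [Fintype.sum_ite_imp, Finset.sum_add_distrib]
  simp only [ZMod.card, Finset.sum_const, Finset.card_univ, smul_eq_mul, Finset.sum_boole,
    Nat.cast_id, Nat.add_right_cancel_iff]
  ring

theorem monoAPCount_one (k : ℕ) (c : ZMod 1 → Fin 2) : monoAPCount 1 k c = 1 := by
  have hall : {p : ZMod 1 × ZMod 1 | ∀ i < k, c (p.1 + i • p.2) = c p.1} = Set.univ :=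
    Set.eq_univ_of_forall fun _ _ _ ↦ congrArg c (Subsingleton.elim _ _)
  rw [monoAPCount, hall, Set.ncard_univ, Nat.card_unique]

theorem exists_coloring_succ_mul_monoAPCount_pow {q k : ℕ} [NeZero q] {A : ZMod q → Fin 2}
    {h : ZMod q} (hA : BreaksProperAPsOff k A h) (j : ℕ) :
    ∃ c : ZMod (q ^ j) → Fin 2, (q + 1) * monoAPCount (q ^ j) k c = q ^ (2 * j) + q := by
  induction j with
  | zero => exact ⟨0, by rw [pow_zero, monoAPCount_one]; ring⟩
  | succ j ih =>
    obtain ⟨c, hc⟩ := ih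
    rw [pow_succ]
    refine ⟨blowUp A h c, ?_⟩
    rw [monoAPCount_blowUp hA]
    zify [NeZero.one_le] at hc ⊢
    linear_combination hc

def pattern11 : ZMod 11 → Fin 2 := ![0, 0, 0, 1, 0, 0, 1, 0, 1, 1, 1]

theorem breaksProperAPsOff_pattern11 : BreaksProperAPsOff 4 pattern11 5 := by
  unfold BreaksProperAPsOff
  decide

theorem liminf_m4_le_one_twelfth :
    ∀ ε : ℝ, 0 < ε → ∀ M : ℕ, ∃ n : ℕ, M ≤ n ∧
      ∃ c : ZMod n → Fin 2, (monoAPCount n 4 c : ℝ) ≤ (1 / 12 + ε) * (n : ℝ) ^ 2 := by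
  intro ε hε M
  obtain ⟨j, hj⟩ := ((tendsto_pow_atTop_atTop_of_one_lt (by norm_num : (1 : ℝ) < 11))
    |>.eventually_ge_atTop (max M (11 / (12 * ε)))).exists
  obtain ⟨hjM, hjε⟩ := max_le_iff.mp hj
  obtain ⟨c, hc⟩ := exists_coloring_succ_mul_monoAPCount_pow breaksProperAPsOff_pattern11 j
  refine ⟨11 ^ j, by exact_mod_cast hjM, c, ?_⟩
  have hcount : 12 * (monoAPCount (11 ^ j) 4 c : ℝ) = ((11 : ℝ) ^ j) ^ 2 + 11 := by
    rw [← pow_mul, mul_comm j]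
    exact_mod_cast hc
  have hlarge : 11 ≤ 12 * ε * (11 : ℝ) ^ j := by
    rwa [div_le_iff₀' (by positivity)] at hjε
  have hone : 1 ≤ (11 : ℝ) ^ j := one_le_pow₀ (by norm_num)
  push_cast
  nlinarith
end

section
/- For every ε > 0 and every M there exists an integer n ≥ M and a 2-coloring c of Z_n such that M_5(n,c) ≤ (1/38 + ε)·n². (Equivalently, the lower limit as n → ∞ of min_c M_5(n,c)/n² is at most 1/38.) -/
theorem AddMonoidHom.ncard_preimage_of_surjective {G H : Type*} [AddGroup G] [AddGroup H]
    {φ : G →+ H} (hφ : Function.Surjective φ) (S : Set H) :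
    (φ ⁻¹' S).ncard = S.ncard * Nat.card φ.ker := by
  let e : G ≃ H × φ.ker := AddSubgroup.addGroupEquivQuotientProdAddSubgroup.trans
    ((QuotientAddGroup.quotientKerEquivOfSurjective φ hφ).toEquiv.prodCongr (Equiv.refl _))
  have he : ∀ x, (e x).1 = φ x := fun _ => rfl
  have hpre : φ ⁻¹' S = e ⁻¹' (S ×ˢ Set.univ) := by
    ext x
    simp [he]
  rw [hpre, Set.ncard_preimage_of_injective_subset_range e.injective (by simp),
    Set.ncard_prod, Set.ncard_univ]

theorem AddMonoidHom.card_eq_card_mul_card_ker_of_surjective {G H : Type*} [AddGroup G]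
    [AddGroup H] {φ : G →+ H} (hφ : Function.Surjective φ) :
    Nat.card G = Nat.card H * Nat.card φ.ker := by
  simpa using φ.ncard_preimage_of_surjective hφ Set.univ

theorem monoAPCount_comp_castHom (q m k : ℕ) [NeZero q] [NeZero m] (c : ZMod q → Fin 2) :
    monoAPCount (q * m) k (c ∘ ZMod.castHom (dvd_mul_right q m) (ZMod q))
      = monoAPCount q k c * m ^ 2 := by
  set f := (ZMod.castHom (dvd_mul_right q m) (ZMod q)).toAddMonoidHom
  have hf : Function.Surjective f := ZMod.castHom_surjective (dvd_mul_right q m)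
  set φ := f.prodMap f
  have hφ : Function.Surjective φ := Prod.map_surjective.mpr ⟨hf, hf⟩
  have hker : Nat.card φ.ker = m ^ 2 := by
    have hcard := φ.card_eq_card_mul_card_ker_of_surjective hφ
    simp only [Nat.card_prod, Nat.card_zmod, mul_mul_mul_comm q m] at hcard
    rw [sq, Nat.eq_of_mul_eq_mul_left (Nat.mul_pos (NeZero.pos q) (NeZero.pos q)) hcard]
  rw [monoAPCount, monoAPCount, ← hker, ← φ.ncard_preimage_of_surjective hφ]
  congr 1
  ext p
  simp [φ, f]

def coloring44 : ZMod 44 → Fin 2 := fun x =>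
  [0,0,0,0,1,0,0,0,0,1,0,0,0,0,1,1,1,0,1,0,0,0,1,1,1,1,0,1,1,1,1,0,1,1,1,1,0,0,0,1,0,1,1,1].getD
    x.val 0

theorem monoAPCount_coloring44 : monoAPCount 44 5 coloring44 = 44 := by
  have hfin : {p : ZMod 44 × ZMod 44 | ∀ i < 5, coloring44 (p.1 + i • p.2) = coloring44 p.1}
      = ↑(Finset.univ.filter fun p : ZMod 44 × ZMod 44 =>
          ∀ i < 5, coloring44 (p.1 + i • p.2) = coloring44 p.1) := by
    simp
  rw [monoAPCount, hfin, Set.ncard_coe_finset]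
  decide

theorem liminf_m5_le_one_over_38 :
    ∀ ε : ℝ, 0 < ε → ∀ M : ℕ, ∃ n : ℕ, M ≤ n ∧
      ∃ c : ZMod n → Fin 2, (monoAPCount n 5 c : ℝ) ≤ (1 / 38 + ε) * (n : ℝ) ^ 2 := by
  intro ε hε M
  refine ⟨44 * (M + 1), by omega,
    coloring44 ∘ ZMod.castHom (dvd_mul_right 44 (M + 1)) (ZMod 44), ?_⟩
  rw [monoAPCount_comp_castHom, monoAPCount_coloring44]
  push_cast
  have hm : (0 : ℝ) < ((M : ℝ) + 1) ^ 2 := by positivity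
  nlinarith [mul_pos hε hm]
end

section
/- For every integer k ≥ 3, every positive integer b, and every ε > 0, there exists N such that for every n ≥ N there is a 2-coloring c of [n] for which the number of monochromatic k-APs in [n] under c is at most (m_k(Z_b) + ε) times the total number of k-APs in [n], where m_k(Z_b) = (min over 2-colorings B of Z_b of M_k(b,B))/b². -/
/-- The minimum of `monoAPCount n k c` over all 2-colorings `c` of `Z_n`. -/
noncomputable def minMonoAPCount (n k : ℕ) : ℕ :=
  sInf {m : ℕ | ∃ c : ZMod n → Fin 2, monoAPCount n k c = m}

/-- Number of `k`-APs in `[n] = {1,…,n}`: pairs `(a,d)` of integers with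
`1 ≤ a ≤ n` and `1 ≤ a+(k-1)d ≤ n`. -/
noncomputable def intervalAPCount (n k : ℕ) : ℕ :=
  Set.ncard {p : ℤ × ℤ | 1 ≤ p.1 ∧ p.1 ≤ n ∧
    1 ≤ p.1 + ((k : ℤ) - 1) * p.2 ∧ p.1 + ((k : ℤ) - 1) * p.2 ≤ n}

/-- Number of monochromatic `k`-APs in `[n]` under the 2-coloring `c`. -/
noncomputable def intervalMonoAPCount (n k : ℕ) (c : ℤ → Fin 2) : ℕ :=
  Set.ncard {p : ℤ × ℤ | 1 ≤ p.1 ∧ p.1 ≤ n ∧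
    1 ≤ p.1 + ((k : ℤ) - 1) * p.2 ∧ p.1 + ((k : ℤ) - 1) * p.2 ≤ n ∧
    ∀ i < k, c (p.1 + (i : ℤ) * p.2) = c p.1}

/-!
Colour `ℤ` periodically by an optimal colouring `B` of `ℤ/b`. A monochromatic `k`-AP `(a, d)` of
`[n]` reduces mod `b` to a monochromatic `k`-AP of `ℤ/b`, and a fixed residue pair `(a₀, d₀)` is
hit by at most `(n/b + 1)(n/((k-1)b) + 1)` APs of `[n]`: `a` lies in a class mod `b`, and then the
last term `a + (k-1)d` lies in a class mod `(k-1)b`. Since `[n]` has at least `n(n/(k-1) - 1)`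
APs (for each `a`, every last term `≡ a` mod `k-1` occurs), the proportion of monochromatic APs
is at most `M_k(b, B)/b² + O(1/n)`.
-/

open Finset Filter

namespace Int

variable {a b : ℤ} {r : ℤ}

theorem card_filter_modEq_Ioc_lt (hab : a ≤ b) (hr : 0 < r) (v : ℤ) :
    (#{x ∈ Ioc a b | x ≡ v [ZMOD r]} : ℝ) < (b - a) / r + 1 := by
  have hcard : (#{x ∈ Ioc a b | x ≡ v [ZMOD r]} : ℚ) =
      max ((⌊(b - v) / (r : ℚ)⌋ : ℚ) - ⌊(a - v) / (r : ℚ)⌋) 0 := by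
    exact_mod_cast Ioc_filter_modEq_card a b hr v
  have hba : (0 : ℚ) ≤ (b - a) / r :=
    div_nonneg (by exact_mod_cast sub_nonneg.2 hab) (by exact_mod_cast hr.le)
  have h : (#{x ∈ Ioc a b | x ≡ v [ZMOD r]} : ℚ) < (b - a) / r + 1 := by
    rw [hcard]
    refine max_lt ?_ (by linarith)
    have := Int.lt_floor_add_one ((a - v) / (r : ℚ))
    have := Int.floor_le ((b - v) / (r : ℚ))
    have : (b - a : ℚ) / r = (b - v) / r - (a - v) / r := by ring
    linarith
  exact_mod_cast h

theorem lt_card_filter_modEq_Ioc (hr : 0 < r) (v : ℤ) :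
    (b - a) / (r : ℝ) - 1 < #{x ∈ Ioc a b | x ≡ v [ZMOD r]} := by
  have hcard : (#{x ∈ Ioc a b | x ≡ v [ZMOD r]} : ℚ) =
      max ((⌊(b - v) / (r : ℚ)⌋ : ℚ) - ⌊(a - v) / (r : ℚ)⌋) 0 := by
    exact_mod_cast Ioc_filter_modEq_card a b hr v
  have h : (b - a) / (r : ℚ) - 1 < #{x ∈ Ioc a b | x ≡ v [ZMOD r]} := by
    rw [hcard]
    refine lt_max_of_lt_left ?_
    have := Int.floor_le ((a - v) / (r : ℚ))
    have := Int.lt_floor_add_one ((b - v) / (r : ℚ))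
    have : (b - a : ℚ) / r = (b - v) / r - (a - v) / r := by ring
    linarith
  exact_mod_cast h

end Int

namespace Finset

variable {α β R : Type*} [DecidableEq β] [Semiring R] [PartialOrder R] [IsOrderedRing R]
  {f : α → β} {s : Finset α} {t : Finset β}

theorem card_le_card_mul_of_maps_to (hf : ∀ a ∈ s, f a ∈ t) {B : R}
    (hB : ∀ b ∈ t, (#{a ∈ s | f a = b} : R) ≤ B) : (#s : R) ≤ #t * B := by
  rw [card_eq_sum_card_fiberwise hf, Nat.cast_sum, ← nsmul_eq_mul]
  exact sum_le_card_nsmul _ _ _ hB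

theorem card_mul_le_card_of_maps_to (hf : ∀ a ∈ s, f a ∈ t) {B : R}
    (hB : ∀ b ∈ t, B ≤ #{a ∈ s | f a = b}) : #t * B ≤ (#s : R) := by
  rw [card_eq_sum_card_fiberwise hf, Nat.cast_sum, ← nsmul_eq_mul]
  exact card_nsmul_le_sum _ _ _ hB

end Finset

theorem eventually_mul_add_mul_add_le_mul_sub (α p q r : ℝ) {ε : ℝ} (hε : 0 < ε) :
    ∀ᶠ x in atTop, α * ((x + p) * (x + q)) ≤ (α + ε) * (x * (x - r)) := by
  set c := α * (p + q) + (α + ε) * r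
  set d := α * p * q
  filter_upwards [eventually_ge_atTop 1, eventually_ge_atTop ((|c| + |d|) / ε)] with x hx1 hxε
  have hεx : |c| + |d| ≤ ε * x := by rwa [div_le_iff₀' hε] at hxε
  have : c * x + d ≤ ε * x * x := by
    nlinarith [le_abs_self c, le_abs_self d, abs_nonneg d]
  linear_combination this

/-- The box `Icc (-n) n` for `d` is only there to make the set visibly finite. -/
noncomputable def intervalAPFinset (n k : ℕ) : Finset (ℤ × ℤ) :=
  {p ∈ Ioc 0 (n : ℤ) ×ˢ Icc (-(n : ℤ)) n | p.1 + ((k : ℤ) - 1) * p.2 ∈ Ioc 0 (n : ℤ)}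

section intervalAPFinset

variable {n k : ℕ}

theorem mem_intervalAPFinset (hk : 2 ≤ k) {p : ℤ × ℤ} :
    p ∈ intervalAPFinset n k ↔ p.1 ∈ Ioc 0 (n : ℤ) ∧ p.1 + ((k : ℤ) - 1) * p.2 ∈ Ioc 0 (n : ℤ) := by
  have hm : (1 : ℤ) ≤ (k : ℤ) - 1 := by omega
  simp only [intervalAPFinset, mem_filter, mem_product, mem_Ioc, mem_Icc]
  constructor
  · rintro ⟨⟨ha, -⟩, he⟩
    exact ⟨ha, he⟩
  · rintro ⟨ha, he⟩
    refine ⟨⟨ha, ?_, ?_⟩, he⟩ <;> nlinarith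

theorem intervalAPCount_eq_card (hk : 2 ≤ k) : intervalAPCount n k = #(intervalAPFinset n k) := by
  rw [intervalAPCount, ← Set.ncard_coe_finset]
  congr 1
  ext p
  simp only [Set.mem_ofPred_eq, mem_coe, mem_intervalAPFinset hk, mem_Ioc]
  omega

theorem intervalMonoAPCount_eq_card (hk : 2 ≤ k) (c : ℤ → Fin 2) :
    intervalMonoAPCount n k c =
      #{p ∈ intervalAPFinset n k | ∀ i < k, c (p.1 + (i : ℤ) * p.2) = c p.1} := by
  rw [intervalMonoAPCount, ← Set.ncard_coe_finset]
  congr 1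
  ext p
  simp only [Set.mem_ofPred_eq, coe_filter, mem_intervalAPFinset hk, mem_Ioc]
  constructor
  · rintro ⟨h1, h2, h3, h4, h5⟩
    exact ⟨⟨⟨by omega, h2⟩, by omega, h4⟩, h5⟩
  · rintro ⟨⟨⟨h1, h2⟩, h3, h4⟩, h5⟩
    exact ⟨by omega, h2, by omega, h4, h5⟩

theorem sub_one_lt_card_filter_fst_intervalAPFinset (hk : 2 ≤ k) {a : ℤ} (ha : a ∈ Ioc 0 (n : ℤ)) :
    (n : ℝ) / ((k : ℝ) - 1) - 1 < #{p ∈ intervalAPFinset n k | p.1 = a} := by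
  have hm : (0 : ℤ) < (k : ℤ) - 1 := by omega
  have key := Int.lt_card_filter_modEq_Ioc (a := 0) (b := n) hm a
  push_cast [sub_zero] at key
  refine key.trans_le ?_
  norm_cast
  refine card_le_card_of_injOn (fun e => (a, (e - a) / ((k : ℤ) - 1))) ?_ ?_
  · intro e he
    simp only [coe_filter, Set.mem_ofPred_eq] at he
    obtain ⟨he, hea⟩ := he
    have hdvd : (k : ℤ) - 1 ∣ e - a := (Int.ModEq.dvd hea.symm)
    simp only [coe_filter, Set.mem_ofPred_eq, mem_intervalAPFinset hk]
    refine ⟨⟨ha, ?_⟩, trivial⟩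
    rwa [Int.mul_ediv_cancel' hdvd, add_sub_cancel]
  · intro e he e' he' h
    simp only [coe_filter, Set.mem_ofPred_eq] at he he'
    have := (Int.ediv_left_inj (Int.ModEq.dvd he.2.symm) (Int.ModEq.dvd he'.2.symm)).1
      (Prod.ext_iff.1 h).2
    omega

theorem mul_sub_one_le_card_intervalAPFinset (hk : 2 ≤ k) :
    (n : ℝ) * ((n : ℝ) / ((k : ℝ) - 1) - 1) ≤ #(intervalAPFinset n k) := by
  have hcard : #(Ioc 0 (n : ℤ)) = n := by simp
  have := card_mul_le_card_of_maps_to (s := intervalAPFinset n k) (f := Prod.fst)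
    (fun p hp => ((mem_intervalAPFinset hk).1 hp).1)
    (fun a ha => (sub_one_lt_card_filter_fst_intervalAPFinset hk ha).le)
  rwa [hcard] at this

theorem card_filter_fst_modEq_intervalAPFinset_lt (hk : 2 ≤ k) {b : ℤ} (hb : 0 < b) (a d₀ : ℤ) :
    (#{p ∈ intervalAPFinset n k | p.1 = a ∧ p.2 ≡ d₀ [ZMOD b]} : ℝ) <
      n / (((k : ℝ) - 1) * b) + 1 := by
  have hm : (0 : ℤ) < (k : ℤ) - 1 := by omega
  have key := Int.card_filter_modEq_Ioc_lt (a := 0) (b := n) (by positivity) (mul_pos hm hb)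
    (a + ((k : ℤ) - 1) * d₀)
  push_cast [sub_zero] at key
  refine lt_of_le_of_lt ?_ key
  norm_cast
  refine card_le_card_of_injOn (fun p => p.1 + ((k : ℤ) - 1) * p.2) ?_ ?_
  · intro p hp
    simp only [coe_filter, Set.mem_ofPred_eq, mem_intervalAPFinset hk] at hp ⊢
    obtain ⟨⟨-, he⟩, rfl, hd⟩ := hp
    exact ⟨he, Int.ModEq.add_left _ (Int.ModEq.mul_left' hd)⟩
  · intro p hp p' hp' h
    simp only [coe_filter, Set.mem_ofPred_eq] at hp hp'
    have h1 : p.1 = p'.1 := hp.2.1.trans hp'.2.1.symm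
    have h2 : p.2 = p'.2 := by
      simp only [h1, add_right_inj] at h
      exact mul_left_cancel₀ hm.ne' h
    exact Prod.ext h1 h2

theorem card_filter_modEq_intervalAPFinset_le (hk : 2 ≤ k) {b : ℤ} (hb : 0 < b) (a₀ d₀ : ℤ) :
    (#{p ∈ intervalAPFinset n k | p.1 ≡ a₀ [ZMOD b] ∧ p.2 ≡ d₀ [ZMOD b]} : ℝ) ≤
      (n / b + 1) * (n / (((k : ℝ) - 1) * b) + 1) := by
  have hm : (1 : ℝ) ≤ (k : ℝ) - 1 := by
    have : (2 : ℝ) ≤ k := by exact_mod_cast hk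
    linarith
  have hcol : ∀ a ∈ ({a ∈ Ioc 0 (n : ℤ) | a ≡ a₀ [ZMOD b]} : Finset ℤ),
      (#{p ∈ {p ∈ intervalAPFinset n k | p.1 ≡ a₀ [ZMOD b] ∧ p.2 ≡ d₀ [ZMOD b]} | p.1 = a} : ℝ) ≤
        n / (((k : ℝ) - 1) * b) + 1 := by
    intro a _
    refine le_trans (Nat.cast_le.2 (card_le_card fun p hp => ?_))
      (card_filter_fst_modEq_intervalAPFinset_lt hk hb a d₀).le
    simp only [mem_filter] at hp ⊢
    exact ⟨hp.1.1, hp.2, hp.1.2.2⟩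
  have hfst : ∀ p ∈ ({p ∈ intervalAPFinset n k | p.1 ≡ a₀ [ZMOD b] ∧ p.2 ≡ d₀ [ZMOD b]} : Finset _),
      p.1 ∈ ({a ∈ Ioc 0 (n : ℤ) | a ≡ a₀ [ZMOD b]} : Finset ℤ) := by
    intro p hp
    simp only [mem_filter] at hp ⊢
    exact ⟨((mem_intervalAPFinset hk).1 hp.1).1, hp.2.1⟩
  calc _ ≤ _ := card_le_card_mul_of_maps_to hfst hcol
    _ ≤ (n / b + 1) * (n / (((k : ℝ) - 1) * b) + 1) := by
      have hbR : (0 : ℝ) < b := by exact_mod_cast hb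
      gcongr
      have := Int.card_filter_modEq_Ioc_lt (a := 0) (b := n) (by positivity) hb a₀
      push_cast [sub_zero] at this
      exact this.le

end intervalAPFinset

theorem monoAPCount_eq_card (n k : ℕ) [NeZero n] (c : ZMod n → Fin 2) :
    monoAPCount n k c = #{p : ZMod n × ZMod n | ∀ i < k, c (p.1 + i • p.2) = c p.1} := by
  rw [monoAPCount, ← Set.ncard_coe_finset]
  simp

theorem exists_monoAPCount_eq_minMonoAPCount (n k : ℕ) :
    ∃ c : ZMod n → Fin 2, monoAPCount n k c = minMonoAPCount n k :=
  Nat.sInf_mem (s := {m | ∃ c : ZMod n → Fin 2, monoAPCount n k c = m}) ⟨_, 0, rfl⟩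

theorem intervalMonoAPCount_comp_intCast_le {n k b : ℕ} (hk : 2 ≤ k) [NeZero b]
    (B : ZMod b → Fin 2) :
    (intervalMonoAPCount n k (fun x => B x) : ℝ) ≤
      monoAPCount b k B * ((n / b + 1) * (n / (((k : ℝ) - 1) * b) + 1)) := by
  rw [intervalMonoAPCount_eq_card hk, monoAPCount_eq_card]
  refine card_le_card_mul_of_maps_to (f := fun p => ((p.1 : ZMod b), (p.2 : ZMod b)))
    (fun p hp => ?_) (fun r _ => ?_)
  · simp only [mem_filter, mem_univ, true_and] at hp ⊢
    intro i hi
    simpa [nsmul_eq_mul] using hp.2 i hi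
  · obtain ⟨x, y⟩ := r
    obtain ⟨a₀, rfl⟩ := ZMod.intCast_surjective x
    obtain ⟨d₀, rfl⟩ := ZMod.intCast_surjective y
    have hb : (0 : ℤ) < b := by exact_mod_cast Nat.pos_of_ne_zero (NeZero.ne b)
    have := card_filter_modEq_intervalAPFinset_le (n := n) hk hb a₀ d₀
    push_cast at this
    refine le_trans (Nat.cast_le.2 (card_le_card fun p hp => ?_)) this
    simp only [mem_filter, Prod.ext_iff, ZMod.intCast_eq_intCast_iff] at hp ⊢
    exact ⟨hp.1.1, hp.2⟩

theorem interval_upper_bound_from_cyclic :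
    ∀ k : ℕ, 3 ≤ k → ∀ b : ℕ, 0 < b → ∀ ε : ℝ, 0 < ε → ∃ N : ℕ, ∀ n : ℕ, N ≤ n →
      ∃ c : ℤ → Fin 2,
        (intervalMonoAPCount n k c : ℝ) ≤
          ((minMonoAPCount b k : ℝ) / (b : ℝ) ^ 2 + ε) * (intervalAPCount n k : ℝ) := by
  intro k hk b hb ε hε
  have hk2 : 2 ≤ k := by omega
  have : NeZero b := ⟨hb.ne'⟩
  obtain ⟨B, hB⟩ := exists_monoAPCount_eq_minMonoAPCount b k
  set α := (minMonoAPCount b k : ℝ) / (b : ℝ) ^ 2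
  set m : ℝ := (k : ℝ) - 1
  have hm : 0 < m := by
    have : (3 : ℝ) ≤ k := by exact_mod_cast hk
    linarith
  have hbR : (0 : ℝ) < b := by exact_mod_cast hb
  obtain ⟨N, hN⟩ := eventually_atTop.1 <| tendsto_natCast_atTop_atTop.eventually <|
    eventually_mul_add_mul_add_le_mul_sub α b (m * b) m hε
  refine ⟨N, fun n hn => ⟨fun x => B x, ?_⟩⟩
  calc (intervalMonoAPCount n k (fun x => B x) : ℝ)
      ≤ minMonoAPCount b k * ((n / b + 1) * (n / (m * b) + 1)) := by
        rw [← hB]; exact intervalMonoAPCount_comp_intCast_le hk2 B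
    _ = α * ((n + b) * (n + m * b)) / m := by
        simp only [α]; field_simp
    _ ≤ (α + ε) * (n * (n - m)) / m := div_le_div_of_nonneg_right (hN n hn) hm.le
    _ = (α + ε) * (n * (n / m - 1)) := by field_simp
    _ ≤ (α + ε) * intervalAPCount n k := by
        rw [intervalAPCount_eq_card hk2]
        gcongr
        exact mul_sub_one_le_card_intervalAPFinset hk2
end

section
/- For every positive integer n, every 2-coloring c of Z_n satisfies M_3(n,c) ≥ n²/4, i.e., the number of pairs (a,d) ∈ Z_n × Z_n with c(a) = c(a+d) = c(a+2d) is at least n²/4. -/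
open Finset

section

variable {G : Type*} [Fintype G]

lemma sum_sum_mul_add [AddGroup G] (f : G → ℝ) :
    ∑ a, ∑ d, f a * f (a + d) = (∑ a, f a) ^ 2 := by
  simp_rw [← mul_sum]
  rw [sq, sum_mul]
  exact sum_congr rfl fun a _ => congrArg _ (Equiv.sum_comp (Equiv.addLeft a) f)

lemma sum_sum_mul_add_add_two_nsmul [AddGroup G] (f : G → ℝ) :
    ∑ a, ∑ d, f (a + d) * f (a + 2 • d) = (∑ a, f a) ^ 2 := by
  rw [← sum_sum_mul_add f, sum_comm]
  conv_rhs => rw [sum_comm]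
  refine sum_congr rfl fun d _ => ?_
  simpa [two_nsmul, add_assoc] using
    Equiv.sum_comp (Equiv.addRight d) (fun b => f b * f (b + d))

lemma sum_sum_mul_add_nsmul_nonneg [AddCommGroup G] (f : G → ℝ) (k : ℕ) :
    0 ≤ ∑ a, ∑ d, f a * f (a + k • d) := by
  set g : G → ℝ := fun u => ∑ t, f (u + k • t)
  have g_add_nsmul (u t : G) : g (u + k • t) = g u := by
    simp only [g, add_assoc, ← nsmul_add]
    exact Equiv.sum_comp (Equiv.addLeft t) (fun r => f (u + k • r))
  have sum_sq_g : ∑ u, g u * g u = Fintype.card G * ∑ a, ∑ d, f a * f (a + k • d) :=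
    calc ∑ u, g u * g u
        = ∑ t, ∑ u, f (u + k • t) * g (u + k • t) := by
          rw [sum_comm]; simp only [g_add_nsmul, ← sum_mul]; rfl
      _ = ∑ t : G, ∑ v, f v * g v :=
          sum_congr rfl fun t _ => Equiv.sum_comp (Equiv.addRight _) (fun v => f v * g v)
      _ = Fintype.card G * ∑ a, ∑ d, f a * f (a + k • d) := by
          simp [g, mul_sum]
  have : 0 ≤ ∑ u, g u * g u := sum_nonneg fun u _ => mul_self_nonneg _
  exact nonneg_of_mul_nonneg_right (sum_sq_g ▸ this) (by exact_mod_cast Fintype.card_pos)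

end

def spin (i : Fin 2) : ℝ := if i = 0 then 1 else -1

lemma ite_and_eq_eq_spin (x y z : Fin 2) :
    (if y = x ∧ z = x then (1 : ℝ) else 0) =
      (1 + spin x * spin y + spin x * spin z + spin y * spin z) / 4 := by
  fin_cases x <;> fin_cases y <;> fin_cases z <;> norm_num [spin]

theorem card_sq_div_four_le_sum_monochromatic_three_AP {G : Type*} [AddCommGroup G] [Fintype G]
    (c : G → Fin 2) :
    (Fintype.card G : ℝ) ^ 2 / 4 ≤
      ∑ a, ∑ d, if c (a + d) = c a ∧ c (a + 2 • d) = c a then (1 : ℝ) else 0 := by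
  set s : G → ℝ := fun x => spin (c x)
  have expand : ∑ a, ∑ d, (if c (a + d) = c a ∧ c (a + 2 • d) = c a then (1 : ℝ) else 0) =
      ((Fintype.card G : ℝ) ^ 2 + 2 * (∑ a, s a) ^ 2 + ∑ a, ∑ d, s a * s (a + 2 • d)) / 4 := by
    simp only [ite_and_eq_eq_spin, ← sum_div, sum_add_distrib]
    rw [sum_sum_mul_add s, sum_sum_mul_add_add_two_nsmul s]
    simp only [sum_const, card_univ, nsmul_eq_mul, mul_one]
    ring
  rw [expand]
  linarith [sum_sum_mul_add_nsmul_nonneg s 2, sq_nonneg (∑ a, s a)]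

lemma monoAPCount_three_eq_sum (n : ℕ) [NeZero n] (c : ZMod n → Fin 2) :
    (monoAPCount n 3 c : ℝ) =
      ∑ a, ∑ d, if c (a + d) = c a ∧ c (a + 2 • d) = c a then (1 : ℝ) else 0 := by
  have : {p : ZMod n × ZMod n | ∀ i < 3, c (p.1 + i • p.2) = c p.1} =
      ↑(univ.filter fun p : ZMod n × ZMod n =>
        c (p.1 + p.2) = c p.1 ∧ c (p.1 + 2 • p.2) = c p.1) := by
    ext p
    simp only [Set.mem_ofPred_eq, coe_filter, mem_univ, true_and, Nat.forall_lt_succ_right,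
      Nat.not_lt_zero, IsEmpty.forall_iff, implies_true, zero_smul, one_smul, add_zero]
  rw [monoAPCount, this, Set.ncard_coe_finset, ← sum_boole, Fintype.sum_prod_type]

theorem m3_lower_bound :
    ∀ n : ℕ, 0 < n → ∀ c : ZMod n → Fin 2,
      (n : ℝ) ^ 2 / 4 ≤ (monoAPCount n 3 c : ℝ) := by
  intro n hn c
  have : NeZero n := ⟨hn.ne'⟩
  simpa [monoAPCount_three_eq_sum] using card_sq_div_four_le_sum_monochromatic_three_AP c
end
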